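/- Let A be a commutative ring, L a left ideal and R a right ideal of M_n(A), with row space V(L) ⊆ A^n of L and column space V(R) ⊆ A^n of R. Then the quotient A-module M_n(A)/(L + R) is isomorphic to (A^n/V(R)) ⊗_A (A^n/V(L)). -/

import Mathlib

/-!
Under the outer-product isomorphism `A^n ⊗ A^n ≅ M_n(A)`, `v ⊗ w ↦ v wᵀ`, the image of
`V(R) ⊗ A^n` is exactly `R`: an outer product `(N e_j) wᵀ = N (e_j wᵀ)` with `N ∈ R` lies in the
right ideal `R`, and conversely every `N` is the sum of the outer products of its columns with the
unit vectors. Symmetrically the image of `A^n ⊗ V(L)` is `L`, so `M_n(A)/(L + R)` is the quotient of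
`A^n ⊗ A^n` by `V(R) ⊗ A^n + A^n ⊗ V(L)`, which is `(A^n/V(R)) ⊗ (A^n/V(L))` by right exactness of
the tensor product.
-/

open TensorProduct

namespace Matrix

variable {ι κ A : Type*} [CommSemiring A]

def colSpan (R : Submodule A (Matrix ι κ A)) : Submodule A (ι → A) :=
  Submodule.span A {v | ∃ N ∈ R, ∃ j : κ, (fun i => N i j) = v}

def rowSpan (L : Submodule A (Matrix ι κ A)) : Submodule A (κ → A) :=
  Submodule.span A {v | ∃ N ∈ L, ∃ i : ι, N i = v}

theorem sum_vecMulVec_col_single [Fintype κ] [DecidableEq κ] (N : Matrix ι κ A) :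
    ∑ j, vecMulVec (N.col j) (Pi.single j 1) = N := by
  ext i k
  simp [sum_apply, vecMulVec_apply, Pi.single_apply]

theorem sum_vecMulVec_single_row [Fintype ι] [DecidableEq ι] (N : Matrix ι κ A) :
    ∑ i, vecMulVec (Pi.single i 1) (N.row i) = N := by
  ext i k
  simp [sum_apply, vecMulVec_apply, Pi.single_apply]

theorem vecMulVec_mem_of_mem_colSpan [Fintype κ] [DecidableEq κ]
    {R : Submodule A (Matrix ι κ A)}
    (hR : ∀ (N : Matrix ι κ A) (X : Matrix κ κ A), N ∈ R → N * X ∈ R) {v : ι → A}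
    (hv : v ∈ colSpan R) (w : κ → A) : vecMulVec v w ∈ R := by
  suffices colSpan R ≤ R.comap ((vecMulVecBilin A A).flip w) from this hv
  refine Submodule.span_le.2 ?_
  rintro _ ⟨N, hN, j, rfl⟩
  have : vecMulVec (fun i => N i j) w = N * vecMulVec (Pi.single j 1) w := by
    rw [mul_vecMulVec, mulVec_single_one]; rfl
  simpa [this] using hR N _ hN

theorem vecMulVec_mem_of_mem_rowSpan [Fintype ι] [DecidableEq ι]
    {L : Submodule A (Matrix ι κ A)}
    (hL : ∀ (X : Matrix ι ι A) (N : Matrix ι κ A), N ∈ L → X * N ∈ L) (v : ι → A) {w : κ → A}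
    (hw : w ∈ rowSpan L) : vecMulVec v w ∈ L := by
  suffices rowSpan L ≤ L.comap (vecMulVecBilin A A v) from this hw
  refine Submodule.span_le.2 ?_
  rintro _ ⟨N, hN, i, rfl⟩
  have : vecMulVec v (N i) = vecMulVec v (Pi.single i 1) * N := by
    rw [vecMulVec_mul, single_one_vecMul]; rfl
  simpa [this] using hL _ N hN

theorem map₂_vecMulVecBilin_colSpan [Fintype κ] [DecidableEq κ]
    {R : Submodule A (Matrix ι κ A)}
    (hR : ∀ (N : Matrix ι κ A) (X : Matrix κ κ A), N ∈ R → N * X ∈ R) :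
    Submodule.map₂ (vecMulVecBilin A A) (colSpan R) ⊤ = R := by
  refine le_antisymm (Submodule.map₂_le.2 fun v hv w _ => vecMulVec_mem_of_mem_colSpan hR hv w)
    fun N hN => ?_
  rw [← sum_vecMulVec_col_single N]
  exact Submodule.sum_mem _ fun j _ => Submodule.apply_mem_map₂ _
    (Submodule.subset_span ⟨N, hN, j, rfl⟩) Submodule.mem_top

theorem map₂_vecMulVecBilin_rowSpan [Fintype ι] [DecidableEq ι]
    {L : Submodule A (Matrix ι κ A)}
    (hL : ∀ (X : Matrix ι ι A) (N : Matrix ι κ A), N ∈ L → X * N ∈ L) :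
    Submodule.map₂ (vecMulVecBilin A A) ⊤ (rowSpan L) = L := by
  refine le_antisymm (Submodule.map₂_le.2 fun v _ w hw => vecMulVec_mem_of_mem_rowSpan hL v hw)
    fun N hN => ?_
  rw [← sum_vecMulVec_single_row N]
  exact Submodule.sum_mem _ fun i _ => Submodule.apply_mem_map₂ _ Submodule.mem_top
    (Submodule.subset_span ⟨N, hN, i, rfl⟩)

variable (ι κ A) in
noncomputable def outerProductEquiv [Fintype ι] [DecidableEq ι] :
    (ι → A) ⊗[A] (κ → A) ≃ₗ[A] Matrix ι κ A :=
  TensorProduct.comm A _ _ ≪≫ₗ piScalarRight A A (κ → A) ι ≪≫ₗ ofLinearEquiv A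

@[simp]
theorem outerProductEquiv_tmul [Fintype ι] [DecidableEq ι] (v : ι → A) (w : κ → A) :
    outerProductEquiv ι κ A (v ⊗ₜ w) = vecMulVec v w := by
  ext i j
  simp [outerProductEquiv, vecMulVec_apply]

theorem map_outerProductEquiv_map₂_mk [Fintype ι] [DecidableEq ι]
    (p : Submodule A (ι → A)) (q : Submodule A (κ → A)) :
    (Submodule.map₂ (TensorProduct.mk A _ _) p q).map (outerProductEquiv ι κ A).toLinearMap =
      Submodule.map₂ (vecMulVecBilin A A) p q := by
  rw [Submodule.map_map₂]
  congr 1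

end Matrix

open Matrix in
/-- If `L` is a left ideal and `R` a right ideal of `M_n(A)`, with row space `V(L)` and
column space `V(R)`, then `M_n(A)/(L+R) ≅ (A^n/V(R)) ⊗_A (A^n/V(L))` as `A`-modules. -/
theorem stmt_2 {n : ℕ} {A : Type*} [CommRing A]
    (L R : Submodule A (Matrix (Fin n) (Fin n) A))
    (hL : ∀ X N : Matrix (Fin n) (Fin n) A, N ∈ L → X * N ∈ L)
    (hR : ∀ N X : Matrix (Fin n) (Fin n) A, N ∈ R → N * X ∈ R)
    (VL VR : Submodule A (Fin n → A))
    (hVL : VL = Submodule.span A {v : Fin n → A | ∃ N ∈ L, ∃ i : Fin n, N i = v})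
    (hVR : VR = Submodule.span A
      {v : Fin n → A | ∃ N ∈ R, ∃ j : Fin n, (fun i => N i j) = v}) :
    Nonempty ((Matrix (Fin n) (Fin n) A ⧸ (L ⊔ R)) ≃ₗ[A]
      (((Fin n → A) ⧸ VR) ⊗[A] ((Fin n → A) ⧸ VL))) := by
  have hRange : Submodule.map (outerProductEquiv (Fin n) (Fin n) A).toLinearMap
      (LinearMap.range (map VR.subtype LinearMap.id) ⊔
        LinearMap.range (map LinearMap.id VL.subtype)) = L ⊔ R := by
    simp only [Submodule.map_sup, range_map, Submodule.range_subtype, LinearMap.range_id,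
      map_outerProductEquiv_map₂_mk]
    rw [show VR = colSpan R from hVR, show VL = rowSpan L from hVL, map₂_vecMulVecBilin_colSpan hR,
      map₂_vecMulVecBilin_rowSpan hL, sup_comm]
  exact ⟨(Submodule.Quotient.equiv _ _ _ hRange).symm ≪≫ₗ (quotientTensorQuotientEquiv VR VL).symm⟩
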